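/- Let p ∈ R and let n ≥ 2 be an integer. If p ∈ w₃I_n, then p² ∈ w₃I_{2n+1}; in particular, p ∈ w₃I_n implies p² ∈ w₃I_{2n}. -/
import Mathlib


open MvPolynomial Finset

noncomputable section

/-- `R2 = (ℤ/2)[w₂, w₃]`, the polynomial ring in two variables over `ℤ/2ℤ`. -/
abbrev R2 : Type := MvPolynomial (Fin 2) (ZMod 2)

/-- The variable `w₂`. -/
def w2 : R2 := X 0

/-- The variable `w₃`. -/
def w3 : R2 := X 1

/-- The polynomials `g_r`: `g₀ = 1`, `g₁ = 0`, `g₂ = w₂`,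
`g_{r+3} = w₂ g_{r+1} + w₃ g_r`. -/
def g : ℕ → R2
  | 0 => 1
  | 1 => 0
  | 2 => w2
  | (r+3) => w2 * g (r+1) + w3 * g r

/-- The ideal `I_n = (g_{n-2}, g_{n-1}, g_n)`. -/
def I (n : ℕ) : Ideal R2 := Ideal.span {g (n-2), g (n-1), g n}

lemma g_rec (r : ℕ) : g (r+3) = w2 * g (r+1) + w3 * g r := rfl

lemma Igen (m : ℕ) : I (m+2) = Ideal.span {g m, g (m+1), g (m+2)} := by
  have h1 : m+2-2 = m := by omega
  have h2 : m+2-1 = m+1 := by omega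
  rw [I, h1, h2]

lemma mem_I₀ (m : ℕ) : g m ∈ I (m+2) := by
  rw [Igen]; exact Ideal.subset_span (by simp)

lemma mem_I₁ (m : ℕ) : g (m+1) ∈ I (m+2) := by
  rw [Igen]; exact Ideal.subset_span (by simp)

lemma mem_I₂ (m : ℕ) : g (m+2) ∈ I (m+2) := by
  rw [Igen]; exact Ideal.subset_span (by simp)

lemma sqadd (a b : R2) : (a + b)^2 = a^2 + b^2 := CharTwo.add_sq a b

lemma two_eq_zero : (2 : R2) = 0 := by
  have := CharP.cast_eq_zero R2 2
  exact_mod_cast this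

lemma gkey (r : ℕ) : g (2*r+3) = w3 * g r ^ 2 ∧ g (2*r+2) = g (r+1)^2 + w2 * g r ^ 2
    ∧ g (2*r+4) = g (r+2)^2 + w2 * g (r+1)^2 := by
  induction r with
  | zero =>
    refine ⟨?_, ?_, ?_⟩
    · show g 3 = w3 * g 0 ^ 2
      rw [show (3:ℕ) = 0 + 3 from rfl, g_rec]
      simp [g]
    · show g 2 = g 1 ^ 2 + w2 * g 0 ^ 2
      simp [g]
    · show g 4 = g 2 ^ 2 + w2 * g 1 ^ 2
      rw [show (4:ℕ) = 1 + 3 from rfl, g_rec]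
      simp [g]
      ring
  | succ r ih =>
    obtain ⟨h1, h2, h3⟩ := ih
    have e1 : 2*(r+1)+3 = (2*r+2)+3 := by ring
    have e2 : 2*(r+1)+2 = 2*r+4 := by ring
    have e3 : 2*(r+1)+4 = (2*r+3)+3 := by ring
    refine ⟨?_, ?_, ?_⟩
    · rw [e1, g_rec]
      rw [show 2*r+2+1 = 2*r+3 from by ring, h1, h2]
      linear_combination (w2 * w3 * g r ^ 2) * two_eq_zero
    · rw [e2, h3]
    · rw [e3, g_rec]
      rw [show 2*r+3+1 = 2*r+4 from by ring, h3, h1]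
      have hsq : g (r+3) ^ 2 = (w2 * g (r+1)) ^ 2 + (w3 * g r) ^ 2 := by
        rw [g_rec, sqadd]
      linear_combination -hsq

/-- Lemma 4.3: if `p ∈ w₃I_n` then `p² ∈ w₃I_{2n+1}`; in particular `p² ∈ w₃I_{2n}`.
Here `w₃I_m = {w₃ q : q ∈ I_m}`. -/
theorem sq_mem_w3I (p : R2) (n : ℕ) (hn : 2 ≤ n)
    (hp : ∃ q ∈ I n, p = w3 * q) :
    (∃ q ∈ I (2 * n + 1), p ^ 2 = w3 * q) ∧ (∃ q ∈ I (2 * n), p ^ 2 = w3 * q) := by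
  obtain ⟨m, rfl⟩ : ∃ m, n = m + 2 := ⟨n - 2, by omega⟩
  obtain ⟨q, hq, rfl⟩ := hp
  -- the three key elements
  have k0 := (gkey m).1
  have k1 := (gkey (m+1)).1
  have k2 := (gkey (m+2)).1
  rw [show 2*(m+1)+3 = 2*m+5 from by ring] at k1
  rw [show 2*(m+2)+3 = 2*m+7 from by ring] at k2
  -- memberships in I (2m+5)
  have hA1 : w3 * g m ^ 2 ∈ I (2*m+5) := by
    rw [← k0, show 2*m+5 = (2*m+3)+2 from by ring]; exact mem_I₀ _
  have hA2 : w3 * g (m+1) ^ 2 ∈ I (2*m+5) := by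
    rw [← k1, show 2*m+5 = (2*m+3)+2 from by ring]; exact mem_I₂ _
  have hA3 : w3 * g (m+2) ^ 2 ∈ I (2*m+5) := by
    rw [← k2, show 2*m+7 = (2*m+4)+3 from by ring, g_rec]
    rw [show 2*m+4+1 = 2*m+5 from by ring]
    refine Ideal.add_mem _ (Ideal.mul_mem_left _ _ ?_) (Ideal.mul_mem_left _ _ ?_)
    · rw [show 2*m+5 = (2*m+3)+2 from by ring]; exact mem_I₂ _
    · rw [show 2*m+5 = (2*m+3)+2 from by ring, show 2*m+4 = (2*m+3)+1 from by ring]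
      exact mem_I₁ _
  -- memberships in I (2m+4)
  have hg5 : g (2*m+5) ∈ I (2*m+4) := by
    rw [show 2*m+5 = (2*m+2)+3 from by ring, g_rec,
      show 2*m+2+1 = 2*m+3 from by ring]
    refine Ideal.add_mem _ (Ideal.mul_mem_left _ _ ?_) (Ideal.mul_mem_left _ _ ?_)
    · rw [show 2*m+4 = (2*m+2)+2 from by ring, show 2*m+3 = (2*m+2)+1 from by ring]
      exact mem_I₁ _
    · rw [show 2*m+4 = (2*m+2)+2 from by ring]; exact mem_I₀ _
  have hB1 : w3 * g m ^ 2 ∈ I (2*m+4) := by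
    rw [← k0, show 2*m+4 = (2*m+2)+2 from by ring, show 2*m+3 = (2*m+2)+1 from by ring]
    exact mem_I₁ _
  have hB2 : w3 * g (m+1) ^ 2 ∈ I (2*m+4) := by rw [← k1]; exact hg5
  have hB3 : w3 * g (m+2) ^ 2 ∈ I (2*m+4) := by
    rw [← k2, show 2*m+7 = (2*m+4)+3 from by ring, g_rec,
      show 2*m+4+1 = 2*m+5 from by ring]
    refine Ideal.add_mem _ (Ideal.mul_mem_left _ _ hg5) (Ideal.mul_mem_left _ _ ?_)
    rw [show 2*m+4 = (2*m+2)+2 from by ring]; exact mem_I₂ _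
  -- generic: w3 * q ^ 2 lands in any ideal containing the three key elements
  have main : ∀ J : Ideal R2, w3 * g m ^ 2 ∈ J → w3 * g (m+1) ^ 2 ∈ J →
      w3 * g (m+2) ^ 2 ∈ J → w3 * q ^ 2 ∈ J := by
    intro J h0 h1 h2
    rw [Igen, Ideal.mem_span_insert] at hq
    obtain ⟨x, q', hq', rfl⟩ := hq
    rw [Ideal.mem_span_insert] at hq'
    obtain ⟨y, q'', hq'', rfl⟩ := hq'
    rw [Ideal.mem_span_singleton] at hq''
    obtain ⟨z, rfl⟩ := hq''
    have expand : w3 * (x * g m + (y * g (m+1) + g (m+2) * z)) ^ 2 =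
        x^2 * (w3 * g m ^ 2) + (y^2 * (w3 * g (m+1) ^ 2) + z^2 * (w3 * g (m+2) ^ 2)) := by
      rw [sqadd, sqadd]; ring
    rw [expand]
    exact Ideal.add_mem _ (Ideal.mul_mem_left _ _ h0)
      (Ideal.add_mem _ (Ideal.mul_mem_left _ _ h1) (Ideal.mul_mem_left _ _ h2))
  constructor
  · refine ⟨w3 * q ^ 2, ?_, by ring⟩
    rw [show 2*(m+2)+1 = 2*m+5 from by ring]
    exact main _ hA1 hA2 hA3
  · refine ⟨w3 * q ^ 2, ?_, by ring⟩
    rw [show 2*(m+2) = 2*m+4 from by ring]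
    exact main _ hB1 hB2 hB3

end
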